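/- Let π : Σ* → G be a choice of generators for a group G, and suppose there exist a combing R ⊆ Σ* and a constant C ≥ 0 such that every R-triangle T in G has width δ(T) ≤ |T|/75 + C. Then there is a constant K with the following property: for every n ≥ 4 and every cyclic sequence g₁, …, gₙ of elements of G with d(g_i, g_{i+1}) ≤ 1 for 1 ≤ i < n and d(gₙ, g₁) ≤ 1, there exists a triangulation of the convex n-gon with vertices labelled 1, …, n — that is, a maximal set of diagonals {i, j} that pairwise do not cross (diagonals {i,j} and {k,l} with i < j and k < l cross if i < k < j < l or k < i < l < j) — such that every diagonal {i, j} of the triangulation satisfies d(g_i, g_j) ≤ n/6 + K. -/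

import Mathlib

/-- The image in `G` of a word over the generating alphabet, for the monoid homomorphism
`Σ* → G` determined by the letter map `φ`. -/
def wordProd {S G : Type} [Group G] (φ : S → G) (w : List S) : G :=
  (w.map φ).prod

/-- The word metric `d(g,h) = min {|w| : π(w) = g⁻¹h}` on `G`. -/
noncomputable def wdist {S G : Type} [Group G] (φ : S → G) (g h : G) : ℕ :=
  sInf {n : ℕ | ∃ w : List S, wordProd φ w = g⁻¹ * h ∧ w.length = n}

/-- The set of points of the path determined by the word `w` based at `g`. -/
def pathPoints {S G : Type} [Group G] (φ : S → G) (g : G) (w : List S) : Set G :=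
  {x | ∃ i ≤ w.length, x = g * wordProd φ (w.take i)}

/-- A triangle: three vertices joined by three words. -/
structure Tri (S G : Type) [Group G] (φ : S → G) where
  g₀ : G
  g₁ : G
  g₂ : G
  u : List S
  v : List S
  w : List S
  hu : wordProd φ u = g₀⁻¹ * g₁
  hv : wordProd φ v = g₁⁻¹ * g₂
  hw : wordProd φ w = g₂⁻¹ * g₀

/-- A triangle is `δ`-thin if every point on each side is at word-metric distance at most `δ`
from the union of the point sets of the other two sides. -/
def IsThin {S G : Type} [Group G] (φ : S → G) (δ : ℝ) (T : Tri S G φ) : Prop :=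
  (∀ p ∈ pathPoints φ T.g₀ T.u,
      ∃ q ∈ pathPoints φ T.g₁ T.v ∪ pathPoints φ T.g₂ T.w, (wdist φ p q : ℝ) ≤ δ) ∧
  (∀ p ∈ pathPoints φ T.g₁ T.v,
      ∃ q ∈ pathPoints φ T.g₀ T.u ∪ pathPoints φ T.g₂ T.w, (wdist φ p q : ℝ) ≤ δ) ∧
  (∀ p ∈ pathPoints φ T.g₂ T.w,
      ∃ q ∈ pathPoints φ T.g₀ T.u ∪ pathPoints φ T.g₁ T.v, (wdist φ p q : ℝ) ≤ δ)

/-- A triangle is geodesic if each of its three sides is a geodesic. -/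
def IsGeodesicTri {S G : Type} [Group G] (φ : S → G) (T : Tri S G φ) : Prop :=
  T.u.length = wdist φ T.g₀ T.g₁ ∧ T.v.length = wdist φ T.g₁ T.g₂ ∧
    T.w.length = wdist φ T.g₂ T.g₀

/-- `G` is word hyperbolic (with respect to the choice of generators `φ`) if all geodesic
triangles are uniformly thin. -/
def WordHyperbolic {S G : Type} [Group G] (φ : S → G) : Prop :=
  ∃ δ : ℝ, 0 ≤ δ ∧ ∀ T : Tri S G φ, IsGeodesicTri φ T → IsThin φ δ T

/-- A combing: a language projecting onto `G`. -/
def IsCombing {S G : Type} [Group G] (φ : S → G) (R : Language S) : Prop :=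
  ∀ g : G, ∃ w ∈ R, wordProd φ w = g

/-- The word `u#v#w` over `Σ ∪ {#}`, where the letter `#` is modelled by `none`. -/
def hashWord {S : Type} (u v w : List S) : List (Option S) :=
  u.map some ++ [none] ++ v.map some ++ [none] ++ w.map some

/-- The multiplication table `{u#v#w : u,v,w ∈ R, π(u)π(v)π(w) = 1}` determined by
the combing `R`. -/
def multTable {S G : Type} [Group G] (φ : S → G) (R : Language S) : Language (Option S) :=
  {z | ∃ u ∈ R, ∃ v ∈ R, ∃ w ∈ R,
    wordProd φ u * wordProd φ v * wordProd φ w = 1 ∧ z = hashWord u v w}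

/-- The width of a triangle: the smallest `δ` for which it is `δ`-thin. -/
noncomputable def triWidth {S G : Type} [Group G] (φ : S → G) (T : Tri S G φ) : ℝ :=
  sInf {δ : ℝ | IsThin φ δ T}

/-- The norm of a triangle: the maximum word-metric distance between its vertices. -/
noncomputable def triNorm {S G : Type} [Group G] (φ : S → G) (T : Tri S G φ) : ℕ :=
  max (wdist φ T.g₀ T.g₁) (max (wdist φ T.g₁ T.g₂) (wdist φ T.g₀ T.g₂))

/-- A diagonal `{i, j}` (with `i < j`) of the convex `n`-gon whose vertices are labelled
`1, …, n`: the endpoints are distinct, non-adjacent vertices of the polygon. -/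
def IsDiagonal (n : ℕ) (p : ℕ × ℕ) : Prop :=
  1 ≤ p.1 ∧ p.1 + 1 < p.2 ∧ p.2 ≤ n ∧ ¬(p.1 = 1 ∧ p.2 = n)

/-- Diagonals `{i,j}` and `{k,l}` with `i < j`, `k < l` cross if `i < k < j < l` or
`k < i < l < j`. -/
def CrossesDiag (p q : ℕ × ℕ) : Prop :=
  (p.1 < q.1 ∧ q.1 < p.2 ∧ p.2 < q.2) ∨ (q.1 < p.1 ∧ p.1 < q.2 ∧ q.2 < p.2)

/-!
Fix a combing word `ω g ∈ R` for each `g`. Thinness of the triangles whose sides are combing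
words, applied to a unit chain of length `L` cut at its middle vertex, shows by induction that
every point of the combing path between the ends of the chain lies within `L / 25 + β` of some
vertex of the chain: each halving costs `L / 75 + C`, and short chains are handled by the
finiteness of balls. Applying this to a geodesic and to the chain `g_i, …, g_j`, a point of the
combing path roughly equidistant from `g_i` and `g_j` yields a vertex `g_k` of the chain with
`d(g_i, g_k), d(g_k, g_j) ≤ d(g_i, g_j) / 2 + 2n / 25 + O(1)`. Since `2 / 25 < 1 / 12`, a bound
`n / 6 + K` on `d(g_i, g_j)` passes to both halves, so cutting the polygon recursively, starting
from the edge `{1, n}`, gives the triangulation.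
-/

section WordMetric

variable {S G : Type} [Group G] {φ : S → G}

lemma wordProd_append (u v : List S) : wordProd φ (u ++ v) = wordProd φ u * wordProd φ v := by
  simp [wordProd]

lemma wdist_le_length {g h : G} {w : List S} (hw : wordProd φ w = g⁻¹ * h) :
    wdist φ g h ≤ w.length :=
  Nat.sInf_le ⟨w, hw, rfl⟩

lemma exists_length_eq_wdist (hsurj : Function.Surjective (wordProd φ)) (g h : G) :
    ∃ w : List S, wordProd φ w = g⁻¹ * h ∧ w.length = wdist φ g h :=
  have ⟨w, hw⟩ := hsurj (g⁻¹ * h)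
  Nat.sInf_mem (s := {n | ∃ w : List S, wordProd φ w = g⁻¹ * h ∧ w.length = n}) ⟨_, w, hw, rfl⟩

lemma wdist_self (g : G) : wdist φ g g = 0 :=
  Nat.le_zero.1 <| wdist_le_length (w := []) (by simp [wordProd])

lemma wdist_triangle (hsurj : Function.Surjective (wordProd φ)) (g h k : G) :
    wdist φ g k ≤ wdist φ g h + wdist φ h k := by
  obtain ⟨u, hu, hu'⟩ := exists_length_eq_wdist hsurj g h
  obtain ⟨v, hv, hv'⟩ := exists_length_eq_wdist hsurj h k
  calc wdist φ g k ≤ (u ++ v).length := wdist_le_length (by rw [wordProd_append, hu, hv]; group)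
    _ = wdist φ g h + wdist φ h k := by rw [List.length_append, hu', hv']

lemma exists_wordProd_eq_inv (hinv : ∀ a, ∃ b, φ b = (φ a)⁻¹) (w : List S) :
    ∃ w' : List S, wordProd φ w' = (wordProd φ w)⁻¹ ∧ w'.length = w.length := by
  induction w with
  | nil => exact ⟨[], by simp [wordProd], rfl⟩
  | cons a w ih =>
    obtain ⟨w', hw', hlen⟩ := ih
    obtain ⟨b, hb⟩ := hinv a
    refine ⟨w' ++ [b], ?_, by simp [hlen]⟩
    rw [wordProd_append, hw', show wordProd φ (a :: w) = φ a * wordProd φ w by simp [wordProd]]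
    simp [wordProd, hb]

lemma wdist_comm (hsurj : Function.Surjective (wordProd φ)) (hinv : ∀ a, ∃ b, φ b = (φ a)⁻¹)
    (g h : G) : wdist φ g h = wdist φ h g := by
  have key : ∀ x y : G, wdist φ x y ≤ wdist φ y x := fun x y => by
    obtain ⟨w, hw, hlen⟩ := exists_length_eq_wdist hsurj y x
    obtain ⟨w', hw', hlen'⟩ := exists_wordProd_eq_inv hinv w
    calc wdist φ x y ≤ w'.length := wdist_le_length (by rw [hw', hw]; group)
      _ = wdist φ y x := by rw [hlen', hlen]
  exact (key g h).antisymm (key h g)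

lemma mem_pathPoints_base (g : G) (w : List S) : g ∈ pathPoints φ g w :=
  ⟨0, Nat.zero_le _, by simp [wordProd]⟩

lemma wdist_base_le_of_mem_pathPoints {g p : G} {w : List S} (hp : p ∈ pathPoints φ g w) :
    wdist φ g p ≤ w.length := by
  obtain ⟨i, -, rfl⟩ := hp
  exact (wdist_le_length (w := w.take i) (by group)).trans (List.length_take_le' _ _)

lemma wdist_end_le_of_mem_pathPoints {g p : G} {w : List S} (hp : p ∈ pathPoints φ g w) :
    wdist φ p (g * wordProd φ w) ≤ w.length := by
  obtain ⟨i, -, rfl⟩ := hp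
  have hsplit : g * wordProd φ w = g * wordProd φ (w.take i) * wordProd φ (w.drop i) := by
    rw [mul_assoc, ← wordProd_append, List.take_append_drop]
  rw [hsplit]
  exact (wdist_le_length (w := w.drop i) (by group)).trans (by simp)

end WordMetric

section Chains

variable {S G : Type} [Group G] {φ : S → G}

variable (φ) in
def IsUnitChain (c : ℕ → G) (L : ℕ) : Prop :=
  ∀ t < L, wdist φ (c t) (c (t + 1)) ≤ 1

lemma isUnitChain_pathPoints (g : G) (w : List S) (L : ℕ) :
    IsUnitChain φ (fun t => g * wordProd φ (w.take t)) L := fun t _ => by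
  refine (wdist_le_length (w := (w.drop t).take 1) ?_).trans (List.length_take_le _ _)
  show _ = (g * wordProd φ (w.take t))⁻¹ * (g * wordProd φ (w.take (t + 1)))
  rw [List.take_add, wordProd_append]
  group

namespace IsUnitChain

variable {c : ℕ → G} {L : ℕ}

lemma mono (hc : IsUnitChain φ c L) {L' : ℕ} (h : L' ≤ L) : IsUnitChain φ c L' :=
  fun t ht => hc t (ht.trans_le h)

lemma reflect (hsurj : Function.Surjective (wordProd φ)) (hinv : ∀ a, ∃ b, φ b = (φ a)⁻¹)
    (hc : IsUnitChain φ c L) : IsUnitChain φ (fun t => c (L - t)) L := fun t ht => by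
  have h := hc (L - (t + 1)) (by omega)
  rwa [wdist_comm hsurj hinv, show L - (t + 1) + 1 = L - t by omega] at h

lemma wdist_le (hsurj : Function.Surjective (wordProd φ)) (hc : IsUnitChain φ c L) {s t : ℕ}
    (hst : s ≤ t) (ht : t ≤ L) : wdist φ (c s) (c t) ≤ t - s := by
  induction t, hst using Nat.le_induction with
  | base => simp [wdist_self]
  | succ t hst ih =>
    calc wdist φ (c s) (c (t + 1)) ≤ wdist φ (c s) (c t) + wdist φ (c t) (c (t + 1)) :=
          wdist_triangle hsurj _ _ _
      _ ≤ (t - s) + 1 := add_le_add (ih (by omega)) (hc t (by omega))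
      _ = t + 1 - s := by omega

end IsUnitChain

end Chains

section Thin

variable {S G : Type} [Group G] {φ : S → G}

lemma IsThin.mono {δ δ' : ℝ} {T : Tri S G φ} (h : IsThin φ δ T) (hle : δ ≤ δ') :
    IsThin φ δ' T := by
  obtain ⟨h₀, h₁, h₂⟩ := h
  exact ⟨fun p hp => (h₀ p hp).imp fun _ hq => ⟨hq.1, hq.2.trans hle⟩,
    fun p hp => (h₁ p hp).imp fun _ hq => ⟨hq.1, hq.2.trans hle⟩,
    fun p hp => (h₂ p hp).imp fun _ hq => ⟨hq.1, hq.2.trans hle⟩⟩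

lemma IsThin.nonneg {δ : ℝ} {T : Tri S G φ} (h : IsThin φ δ T) : 0 ≤ δ := by
  obtain ⟨q, -, hq⟩ := h.1 T.g₀ (mem_pathPoints_base _ _)
  exact (Nat.cast_nonneg _).trans hq

lemma isThin_perimeter (T : Tri S G φ) :
    IsThin φ (T.u.length + T.v.length + T.w.length) T := by
  have side : ∀ {g h : G} {w : List S}, wordProd φ w = g⁻¹ * h →
      ∀ p ∈ pathPoints φ g w, (wdist φ p h : ℝ) ≤ w.length := fun hw p hp => by
    have := wdist_end_le_of_mem_pathPoints hp
    rw [hw, mul_inv_cancel_left] at this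
    exact_mod_cast this
  have hu := side T.hu
  have hv := side T.hv
  have hw := side T.hw
  have : (0 : ℝ) ≤ T.u.length := by positivity
  have : (0 : ℝ) ≤ T.v.length := by positivity
  have : (0 : ℝ) ≤ T.w.length := by positivity
  exact ⟨fun p hp => ⟨T.g₁, Or.inl (mem_pathPoints_base _ _), by linarith [hu p hp]⟩,
    fun p hp => ⟨T.g₂, Or.inr (mem_pathPoints_base _ _), by linarith [hv p hp]⟩,
    fun p hp => ⟨T.g₀, Or.inl (mem_pathPoints_base _ _), by linarith [hw p hp]⟩⟩

lemma isThin_of_triWidth_lt {δ : ℝ} {T : Tri S G φ} (h : triWidth φ T < δ) : IsThin φ δ T := by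
  obtain ⟨δ', hδ', hlt⟩ := (csInf_lt_iff (s := {δ | IsThin φ δ T})
    ⟨0, fun _ h => h.nonneg⟩ ⟨_, isThin_perimeter T⟩).1 h
  exact hδ'.mono hlt.le

end Thin

section Combing

variable {S G : Type} [Group G] {φ : S → G}

def combTri (ω : G → List S) (hω : ∀ g, wordProd φ (ω g) = g) (x y z : G) : Tri S G φ :=
  ⟨x, y, z, ω (x⁻¹ * y), ω (y⁻¹ * z), ω (z⁻¹ * x), hω _, hω _, hω _⟩

lemma exists_length_le_of_wdist_le [Finite S] (hsurj : Function.Surjective (wordProd φ))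
    (ω : G → List S) (r : ℕ) :
    ∃ β : ℕ, ∀ x y : G, wdist φ x y ≤ r → (ω (x⁻¹ * y)).length ≤ β := by
  obtain ⟨β, hβ⟩ := (((List.finite_length_le S r).image (wordProd φ)).image
    fun g => (ω g).length).bddAbove
  refine ⟨β, fun x y hxy => hβ ⟨x⁻¹ * y, ?_, rfl⟩⟩
  obtain ⟨w, hw, hlen⟩ := exists_length_eq_wdist hsurj x y
  exact ⟨w, hlen.trans_le hxy, hw⟩

variable (φ) in
def CombingTracksChains (ω : G → List S) (β : ℝ) : Prop :=
  ∀ (x y : G) (L : ℕ) (c : ℕ → G), c 0 = x → c L = y → IsUnitChain φ c L →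
    ∀ p ∈ pathPoints φ x (ω (x⁻¹ * y)), ∃ t ≤ L, (wdist φ p (c t) : ℝ) ≤ L / 25 + β

lemma IsUnitChain.triNorm_combTri_le (hsurj : Function.Surjective (wordProd φ))
    (hinv : ∀ a, ∃ b, φ b = (φ a)⁻¹) {ω : G → List S} (hω : ∀ g, wordProd φ (ω g) = g)
    {c : ℕ → G} {L : ℕ} (hc : IsUnitChain φ c L) {q : ℕ} (hq : q ≤ L) :
    triNorm φ (combTri ω hω (c 0) (c L) (c q)) ≤ L := by
  have h₁ := hc.wdist_le hsurj (Nat.zero_le L) le_rfl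
  have h₂ := hc.wdist_le hsurj hq le_rfl
  have h₃ := hc.wdist_le hsurj (Nat.zero_le q) hq
  rw [wdist_comm hsurj hinv] at h₂
  simp only [triNorm, combTri]
  omega

theorem exists_combingTracksChains [Finite S] (hsurj : Function.Surjective (wordProd φ))
    (hinv : ∀ a, ∃ b, φ b = (φ a)⁻¹) {ω : G → List S} (hω : ∀ g, wordProd φ (ω g) = g) {C : ℝ}
    (hthin : ∀ x y z, IsThin φ (triNorm φ (combTri ω hω x y z) / 75 + C) (combTri ω hω x y z)) :
    ∃ β : ℝ, CombingTracksChains φ ω β := by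
  -- Above this length the halving step `L / 75 + C + ⌈L / 2⌉ / 25 ≤ L / 25` holds.
  obtain ⟨β, hβ⟩ := exists_length_le_of_wdist_le hsurj ω (⌈150 * C⌉₊ + 3)
  refine ⟨β, fun x y L => ?_⟩
  induction L using Nat.strong_induction_on generalizing x y with
  | _ L ih =>
  rintro c rfl rfl hc p hp
  rcases le_or_gt L (⌈150 * C⌉₊ + 3) with hL | hL
  · refine ⟨0, Nat.zero_le L, ?_⟩
    have hp₀ : wdist φ (c 0) p ≤ β := (wdist_base_le_of_mem_pathPoints hp).trans
      (hβ _ _ ((hc.wdist_le hsurj (Nat.zero_le L) le_rfl).trans (by omega)))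
    rw [wdist_comm hsurj hinv]
    have : (0 : ℝ) ≤ L / 25 := by positivity
    have : (wdist φ (c 0) p : ℝ) ≤ β := by exact_mod_cast hp₀
    linarith
  -- The other two sides of the thin triangle `(c 0, c L, c q)` are combing paths along the two
  -- halves of the chain, traversed backwards.
  set q := (L + 1) / 2
  have hLC : 150 * C + 3 < L := by
    have := Nat.le_ceil (150 * C)
    have : ((⌈150 * C⌉₊ + 3 : ℕ) : ℝ) < L := by exact_mod_cast hL
    push_cast at this
    linarith
  have hq₂ : 2 * (q : ℝ) ≤ L + 1 := by exact_mod_cast (show 2 * q ≤ L + 1 by omega)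
  have hnorm : (triNorm φ (combTri ω hω (c 0) (c L) (c q)) : ℝ) ≤ L := by
    exact_mod_cast hc.triNorm_combTri_le hsurj hinv hω (by omega)
  obtain ⟨r, hr, hpr⟩ := (hthin (c 0) (c L) (c q)).1 p hp
  have close : ∀ m ≤ q, ∀ t, (wdist φ r (c t) : ℝ) ≤ m / 25 + β →
      (wdist φ p (c t) : ℝ) ≤ L / 25 + β := fun m hm t hrt => by
    have : (m : ℝ) ≤ q := by exact_mod_cast hm
    calc (wdist φ p (c t) : ℝ) ≤ wdist φ p r + wdist φ r (c t) := by
          exact_mod_cast wdist_triangle hsurj _ _ _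
      _ ≤ L / 25 + β := by linarith
  rcases hr with hr | hr
  · obtain ⟨t, ht, hrt⟩ := ih (L - q) (by omega) (c L) (c q) (fun t => c (L - t)) rfl
      (by simp [Nat.sub_sub_self (show q ≤ L by omega)]) ((hc.reflect hsurj hinv).mono (by omega))
      r hr
    exact ⟨L - t, by omega, close (L - q) (by omega) _ hrt⟩
  · obtain ⟨t, ht, hrt⟩ := ih q (by omega) (c q) (c 0) (fun t => c (q - t)) rfl (by simp)
      ((hc.mono (by omega)).reflect hsurj hinv) r hr
    exact ⟨q - t, by omega, close q le_rfl _ hrt⟩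

end Combing

lemma exists_abs_le_one_of_step_le_two (F : ℕ → ℤ) (N : ℕ) (h₀ : F 0 ≤ 0) (hN : 0 ≤ F N)
    (hstep : ∀ s < N, F (s + 1) ≤ F s + 2) : ∃ s ≤ N, |F s| ≤ 1 := by
  induction N with
  | zero => exact ⟨0, le_rfl, abs_le.2 ⟨by omega, by omega⟩⟩
  | succ N ih =>
    by_cases h : 0 ≤ F N
    · obtain ⟨s, hs, h⟩ := ih h fun s hs => hstep s (by omega)
      exact ⟨s, by omega, h⟩
    · have := hstep N (by omega)
      exact ⟨N + 1, le_rfl, abs_le.2 ⟨by omega, by omega⟩⟩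

section Midpoint

variable {S G : Type} [Group G] {φ : S → G}

lemma exists_mem_pathPoints_balanced (hsurj : Function.Surjective (wordProd φ)) (x : G)
    (w : List S) : ∃ p ∈ pathPoints φ x w,
      wdist φ x p ≤ wdist φ p (x * wordProd φ w) + 1 ∧
      wdist φ p (x * wordProd φ w) ≤ wdist φ x p + 1 := by
  set y := x * wordProd φ w
  set pt : ℕ → G := fun s => x * wordProd φ (w.take s)
  have hpt := isUnitChain_pathPoints (φ := φ) x w w.length
  obtain ⟨s, hs, h⟩ := exists_abs_le_one_of_step_le_two
    (fun s => (wdist φ x (pt s) : ℤ) - wdist φ (pt s) y) w.length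
    (by simp [pt, wordProd, wdist_self]) (by simp [pt, y, wdist_self]) fun s hs => by
      have : wdist φ (pt s) (pt (s + 1)) ≤ 1 := hpt s hs
      have := wdist_triangle hsurj x (pt s) (pt (s + 1))
      have := wdist_triangle hsurj (pt s) (pt (s + 1)) y
      omega
  obtain ⟨h₁, h₂⟩ := abs_le.1 h
  exact ⟨pt s, ⟨s, hs, rfl⟩, by omega, by omega⟩

variable {ω : G → List S} {β : ℝ}

lemma CombingTracksChains.nonneg (hβ : CombingTracksChains φ ω β) : 0 ≤ β := by
  obtain ⟨t, -, ht⟩ := hβ 1 1 0 (fun _ => 1) rfl rfl (fun _ h => absurd h (Nat.not_lt_zero _))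
    1 (mem_pathPoints_base _ _)
  simpa [wdist_self] using ht

lemma CombingTracksChains.exists_mem_pathPoints_near_middle (hβ : CombingTracksChains φ ω β)
    (hsurj : Function.Surjective (wordProd φ)) (hinv : ∀ a, ∃ b, φ b = (φ a)⁻¹)
    (hω : ∀ g, wordProd φ (ω g) = g) (x y : G) : ∃ p ∈ pathPoints φ x (ω (x⁻¹ * y)),
      (wdist φ x p : ℝ) ≤ wdist φ x y / 2 + wdist φ x y / 25 + β + 1 ∧
      (wdist φ p y : ℝ) ≤ wdist φ x y / 2 + wdist φ x y / 25 + β + 1 := by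
  obtain ⟨p, hp, hxp, hpy⟩ := exists_mem_pathPoints_balanced hsurj x (ω (x⁻¹ * y))
  rw [hω, mul_inv_cancel_left] at hxp hpy
  -- `p` is near a vertex `e r` of a geodesic from `x` to `y`; being balanced, it is near its middle.
  obtain ⟨γ, hγ, hγlen⟩ := exists_length_eq_wdist hsurj x y
  set e : ℕ → G := fun s => x * wordProd φ (γ.take s)
  have he : IsUnitChain φ e (wdist φ x y) := isUnitChain_pathPoints x γ _
  have heM : e (wdist φ x y) = y := by
    simp only [e, ← hγlen, List.take_length, hγ, mul_inv_cancel_left]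
  obtain ⟨r, hr, hpr⟩ := hβ x y _ e (by simp [e, wordProd]) heM he p hp
  have hxr : wdist φ x (e r) ≤ r :=
    (wdist_le_length (w := γ.take r) (inv_mul_cancel_left x _).symm).trans (List.length_take_le _ _)
  have hry := he.wdist_le hsurj hr le_rfl
  rw [heM] at hry
  have hxrp := wdist_triangle hsurj x (e r) p
  have hpry := wdist_triangle hsurj p (e r) y
  rw [wdist_comm hsurj hinv (e r) p] at hxrp
  have hsum : wdist φ x p + wdist φ p y ≤ wdist φ x y + 2 * wdist φ p (e r) := by omega
  have : ((wdist φ x p + wdist φ p y : ℕ) : ℝ) ≤ wdist φ x y + 2 * (wdist φ p (e r) : ℝ) := by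
    exact_mod_cast hsum
  push_cast at this
  have : (wdist φ x p : ℝ) ≤ wdist φ p y + 1 := by exact_mod_cast hxp
  have : (wdist φ p y : ℝ) ≤ wdist φ x p + 1 := by exact_mod_cast hpy
  exact ⟨p, hp, by linarith, by linarith⟩

lemma CombingTracksChains.exists_midpoint (hβ : CombingTracksChains φ ω β)
    (hsurj : Function.Surjective (wordProd φ)) (hinv : ∀ a, ∃ b, φ b = (φ a)⁻¹)
    (hω : ∀ g, wordProd φ (ω g) = g) {c : ℕ → G} {a : ℕ} (hc : IsUnitChain φ c a) :
    ∃ t ≤ a, (wdist φ (c 0) (c t) : ℝ) ≤ wdist φ (c 0) (c a) / 2 + 2 * a / 25 + 2 * β + 1 ∧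
      (wdist φ (c t) (c a) : ℝ) ≤ wdist φ (c 0) (c a) / 2 + 2 * a / 25 + 2 * β + 1 := by
  obtain ⟨p, hp, hxp, hpy⟩ := hβ.exists_mem_pathPoints_near_middle hsurj hinv hω (c 0) (c a)
  obtain ⟨t, ht, hpt⟩ := hβ _ _ a c rfl rfl hc p hp
  have hMa : (wdist φ (c 0) (c a) : ℝ) ≤ a := by
    exact_mod_cast hc.wdist_le hsurj (Nat.zero_le a) le_rfl
  have h₁ : (wdist φ (c 0) (c t) : ℝ) ≤ wdist φ (c 0) p + wdist φ p (c t) := by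
    exact_mod_cast wdist_triangle hsurj _ _ _
  have h₂ : (wdist φ (c t) (c a) : ℝ) ≤ wdist φ p (c t) + wdist φ p (c a) := by
    rw [wdist_comm hsurj hinv p (c t)]
    exact_mod_cast wdist_triangle hsurj _ _ _
  exact ⟨t, ht, by linarith, by linarith⟩

lemma CombingTracksChains.exists_split (hβ : CombingTracksChains φ ω β)
    (hsurj : Function.Surjective (wordProd φ)) (hinv : ∀ a, ∃ b, φ b = (φ a)⁻¹)
    (hω : ∀ g, wordProd φ (ω g) = g) {c : ℕ → G} {a : ℕ} (hc : IsUnitChain φ c a) (ha : 2 ≤ a)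
    {B : ℝ} (hB : a / 6 + 4 * β + 4 ≤ B) (hd : (wdist φ (c 0) (c a) : ℝ) ≤ B) :
    ∃ t, 0 < t ∧ t < a ∧ (wdist φ (c 0) (c t) : ℝ) ≤ B ∧ (wdist φ (c t) (c a) : ℝ) ≤ B := by
  have := hβ.nonneg
  have : (0 : ℝ) ≤ a := by positivity
  by_cases hnear : (wdist φ (c 0) (c a) : ℝ) ≤ B - 1
  · have h₁ : (wdist φ (c 0) (c 1) : ℝ) ≤ 1 := by exact_mod_cast hc 0 (by omega)
    have h₂ : (wdist φ (c 1) (c a) : ℝ) ≤ wdist φ (c 0) (c 1) + wdist φ (c 0) (c a) := by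
      rw [wdist_comm hsurj hinv (c 0) (c 1)]
      exact_mod_cast wdist_triangle hsurj _ _ _
    exact ⟨1, one_pos, by omega, by linarith, by linarith⟩
  · obtain ⟨t, ht, h₁, h₂⟩ := hβ.exists_midpoint hsurj hinv hω hc
    have h₁' : (wdist φ (c 0) (c t) : ℝ) ≤ B - 1 := by linarith
    have h₂' : (wdist φ (c t) (c a) : ℝ) ≤ B - 1 := by linarith
    refine ⟨t, Nat.pos_of_ne_zero ?_, lt_of_le_of_ne ht ?_, by linarith, by linarith⟩
    · rintro rfl
      exact hnear h₂'
    · rintro rfl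
      exact hnear h₁'

lemma CombingTracksChains.exists_split_polygon (hβ : CombingTracksChains φ ω β)
    (hsurj : Function.Surjective (wordProd φ)) (hinv : ∀ a, ∃ b, φ b = (φ a)⁻¹)
    (hω : ∀ g, wordProd φ (ω g) = g) {n : ℕ} {g : ℕ → G}
    (hstep : ∀ i, 1 ≤ i → i < n → wdist φ (g i) (g (i + 1)) ≤ 1) {i j : ℕ} (hi : 1 ≤ i)
    (hij : i + 2 ≤ j) (hj : j ≤ n) (hd : (wdist φ (g i) (g j) : ℝ) ≤ n / 6 + (4 * β + 4)) :
    ∃ k, i < k ∧ k < j ∧ (wdist φ (g i) (g k) : ℝ) ≤ n / 6 + (4 * β + 4) ∧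
      (wdist φ (g k) (g j) : ℝ) ≤ n / 6 + (4 * β + 4) := by
  have hc : IsUnitChain φ (fun t => g (i + t)) (j - i) := fun t ht =>
    hstep (i + t) (by omega) (by omega)
  have hji : ((j - i : ℕ) : ℝ) ≤ n := by exact_mod_cast (show j - i ≤ n by omega)
  have hij' : i + (j - i) = j := by omega
  obtain ⟨t, ht₀, ht, h₁, h₂⟩ := hβ.exists_split hsurj hinv hω hc (by omega)
    (B := n / 6 + (4 * β + 4)) (by linarith)
    (by simpa [hij'] using hd)
  simp only [Nat.add_zero, hij'] at h₁ h₂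
  exact ⟨i + t, by omega, by omega, h₁, h₂⟩

end Midpoint

section Triangulation

def IsDiagonalOf (i j : ℕ) (p : ℕ × ℕ) : Prop :=
  i ≤ p.1 ∧ p.1 + 1 < p.2 ∧ p.2 ≤ j ∧ ¬(p.1 = i ∧ p.2 = j)

def IsTriangulation (i j : ℕ) (D : Set (ℕ × ℕ)) : Prop :=
  (∀ p ∈ D, IsDiagonalOf i j p) ∧ (∀ p ∈ D, ∀ q ∈ D, ¬CrossesDiag p q) ∧
    ∀ p, IsDiagonalOf i j p → p ∉ D → ∃ q ∈ D, CrossesDiag p q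

lemma isTriangulation_empty {i j : ℕ} (h : j ≤ i + 1) : IsTriangulation i j ∅ :=
  ⟨by simp, by simp, fun p hp => absurd h (by unfold IsDiagonalOf at hp; omega)⟩

lemma IsTriangulation.union {i k j : ℕ} {D₁ D₂ : Set (ℕ × ℕ)} (h₁ : IsTriangulation i k D₁)
    (h₂ : IsTriangulation k j D₂) (hik : i < k) (hkj : k < j) :
    IsTriangulation i j (D₁ ∪ D₂ ∪ {p | IsDiagonalOf i j p ∧ (p = (i, k) ∨ p = (k, j))}) := by
  obtain ⟨diag₁, nc₁, max₁⟩ := h₁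
  obtain ⟨diag₂, nc₂, max₂⟩ := h₂
  refine ⟨?_, ?_, ?_⟩
  · rintro p ((hp | hp) | ⟨hp, -⟩)
    · have := diag₁ p hp
      unfold IsDiagonalOf at *
      omega
    · have := diag₂ p hp
      unfold IsDiagonalOf at *
      omega
    · exact hp
  · have b₁ : ∀ p ∈ D₁, i ≤ p.1 ∧ p.2 ≤ k := fun p hp => ⟨(diag₁ p hp).1, (diag₁ p hp).2.2.1⟩
    have b₂ : ∀ p ∈ D₂, k ≤ p.1 ∧ p.2 ≤ j := fun p hp => ⟨(diag₂ p hp).1, (diag₂ p hp).2.2.1⟩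
    rintro p ((hp | hp) | ⟨-, rfl | rfl⟩) q ((hq | hq) | ⟨-, rfl | rfl⟩) <;>
      first
      | exact nc₁ p hp q hq
      | exact nc₂ p hp q hq
      | (unfold CrossesDiag; grind)
  · rintro p hp hpD
    simp only [Set.mem_union, not_or] at hpD
    obtain ⟨⟨hp₁, hp₂⟩, hpE⟩ := hpD
    have hpik : p ≠ (i, k) := fun h => hpE ⟨hp, Or.inl h⟩
    have hpkj : p ≠ (k, j) := fun h => hpE ⟨hp, Or.inr h⟩
    obtain ⟨hi, hlt, hj, hne⟩ := hp
    rcases le_or_gt p.2 k with hk | hk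
    · obtain ⟨q, hq, hpq⟩ :=
        max₁ p ⟨hi, hlt, hk, fun h => hpik (Prod.ext h.1 h.2)⟩ hp₁
      exact ⟨q, Or.inl (Or.inl hq), hpq⟩
    rcases le_or_gt k p.1 with hk' | hk'
    · obtain ⟨q, hq, hpq⟩ :=
        max₂ p ⟨hk', hlt, hj, fun h => hpkj (Prod.ext h.1 h.2)⟩ hp₂
      exact ⟨q, Or.inl (Or.inr hq), hpq⟩
    -- `p` straddles `k`: it crosses `(i, k)` unless it starts at `i`, and then it crosses `(k, j)`.
    by_cases hpi : p.1 = i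
    · refine ⟨(k, j), Or.inr ⟨by unfold IsDiagonalOf; omega, Or.inr rfl⟩, ?_⟩
      unfold CrossesDiag
      omega
    · refine ⟨(i, k), Or.inr ⟨by unfold IsDiagonalOf; omega, Or.inl rfl⟩, ?_⟩
      unfold CrossesDiag
      omega

theorem exists_isTriangulation (d : ℕ → ℕ → Prop)
    (hsplit : ∀ i j, i + 2 ≤ j → d i j → ∃ k, i < k ∧ k < j ∧ d i k ∧ d k j) (i j : ℕ)
    (hd : d i j) : ∃ D, IsTriangulation i j D ∧ ∀ p ∈ D, d p.1 p.2 := by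
  induction h : j - i using Nat.strong_induction_on generalizing i j with
  | _ m ih =>
  by_cases hij : j ≤ i + 1
  · exact ⟨∅, isTriangulation_empty hij, by simp⟩
  obtain ⟨k, hik, hkj, hdik, hdkj⟩ := hsplit i j (by omega) hd
  obtain ⟨D₁, hD₁, hd₁⟩ := ih (k - i) (by omega) i k hdik rfl
  obtain ⟨D₂, hD₂, hd₂⟩ := ih (j - k) (by omega) k j hdkj rfl
  refine ⟨_, hD₁.union hD₂ hik hkj, ?_⟩
  rintro p ((hp | hp) | ⟨-, rfl | rfl⟩)
  exacts [hd₁ p hp, hd₂ p hp, hdik, hdkj]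

end Triangulation

theorem triangulation_of_cycles_general {S G : Type} [Fintype S] [Group G]
    (inv : S → S)
    (φ : S → G) (hsurj : Function.Surjective (wordProd φ))
    (hφinv : ∀ a, φ (inv a) = (φ a)⁻¹)
    (R : Language S) (hcomb : IsCombing φ R) (C : ℝ)
    (hwidth : ∀ T : Tri S G φ, T.u ∈ R → T.v ∈ R → T.w ∈ R →
      triWidth φ T ≤ (triNorm φ T : ℝ) / 75 + C) :
    ∃ K : ℝ, ∀ n : ℕ, 4 ≤ n → ∀ g : ℕ → G,
      (∀ i : ℕ, 1 ≤ i → i < n → wdist φ (g i) (g (i + 1)) ≤ 1) →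
      wdist φ (g n) (g 1) ≤ 1 →
      ∃ D : Set (ℕ × ℕ),
        (∀ p ∈ D, IsDiagonal n p) ∧
        (∀ p ∈ D, ∀ q ∈ D, ¬CrossesDiag p q) ∧
        (∀ p, IsDiagonal n p → p ∉ D → ∃ q ∈ D, CrossesDiag p q) ∧
        (∀ p ∈ D, (wdist φ (g p.1) (g p.2) : ℝ) ≤ (n : ℝ) / 6 + K) := by
  choose ω hωR hω using hcomb
  have hinv : ∀ a, ∃ b, φ b = (φ a)⁻¹ := fun a => ⟨inv a, hφinv a⟩
  obtain ⟨β, hβ⟩ := exists_combingTracksChains hsurj hinv hω (C := C + 1) fun x y z =>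
    isThin_of_triWidth_lt <| (hwidth _ (hωR _) (hωR _) (hωR _)).trans_lt (by linarith)
  refine ⟨4 * β + 4, fun n hn g hstep hwrap => ?_⟩
  have h1n : (wdist φ (g 1) (g n) : ℝ) ≤ n / 6 + (4 * β + 4) := by
    have : (wdist φ (g 1) (g n) : ℝ) ≤ 1 := by exact_mod_cast wdist_comm hsurj hinv _ _ ▸ hwrap
    have : (0 : ℝ) ≤ n / 6 + 4 * β := by have := hβ.nonneg; positivity
    linarith
  obtain ⟨D, ⟨hdiag, hnc, hmax⟩, hD⟩ :=
    exists_isTriangulation (fun i j => 1 ≤ i ∧ j ≤ n ∧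
      (wdist φ (g i) (g j) : ℝ) ≤ n / 6 + (4 * β + 4)) (fun i j hij ⟨hi, hj, hd⟩ => by
      obtain ⟨k, hik, hkj, h₁, h₂⟩ := hβ.exists_split_polygon hsurj hinv hω hstep hi hij hj hd
      exact ⟨k, hik, hkj, ⟨hi, by omega, h₁⟩, ⟨by omega, hj, h₂⟩⟩) 1 n ⟨le_rfl, le_rfl, h1n⟩
  exact ⟨D, hdiag, hnc, hmax, fun p hp => (hD p hp).2.2⟩

/-- Under the flabby-triangle hypothesis there is a constant `K` such that
every cyclic sequence `g₁, …, gₙ` (`n ≥ 4`) with consecutive distances at most `1` admits a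
triangulation of the labelled convex `n`-gon all of whose diagonals `{i,j}` satisfy
`d(g_i, g_j) ≤ n/6 + K`. -/
theorem triangulation_of_cycles {S G : Type} [Fintype S] [Group G]
    (inv : S → S) (hinv_inv : ∀ a, inv (inv a) = a) (hinv_ne : ∀ a, inv a ≠ a)
    (φ : S → G) (hsurj : Function.Surjective (wordProd φ))
    (hφinv : ∀ a, φ (inv a) = (φ a)⁻¹)
    (R : Language S) (hcomb : IsCombing φ R) (C : ℝ) (hC : 0 ≤ C)
    (hwidth : ∀ T : Tri S G φ, T.u ∈ R → T.v ∈ R → T.w ∈ R →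
      triWidth φ T ≤ (triNorm φ T : ℝ) / 75 + C) :
    ∃ K : ℝ, ∀ n : ℕ, 4 ≤ n → ∀ g : ℕ → G,
      (∀ i : ℕ, 1 ≤ i → i < n → wdist φ (g i) (g (i + 1)) ≤ 1) →
      wdist φ (g n) (g 1) ≤ 1 →
      ∃ D : Set (ℕ × ℕ),
        (∀ p ∈ D, IsDiagonal n p) ∧
        (∀ p ∈ D, ∀ q ∈ D, ¬CrossesDiag p q) ∧
        (∀ p, IsDiagonal n p → p ∉ D → ∃ q ∈ D, CrossesDiag p q) ∧
        (∀ p ∈ D, (wdist φ (g p.1) (g p.2) : ℝ) ≤ (n : ℝ) / 6 + K) :=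
  triangulation_of_cycles_general inv φ hsurj hφinv R hcomb C hwidth
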